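/- Suppose the true value is θ* ≠ 0 and 0 < ψ < 1, h > 0. Let θ̂_r^{(n)} | θ* ~ N(θ*, σ²/n). Then BF_{SM:A}(θ̂_r^{(n)}; ψ, h) converges in probability, as n → ∞, to the constant (1−ψ) · p_S(θ*; h)/p_A(θ*), where p_S(θ; h) = N(θ; 0, h σ_o²) and p_A(θ) = N(θ; θ̂_o, σ_o²). -/
import Mathlib


open MeasureTheory ProbabilityTheory Filter Real Topology

noncomputable def nd (x μ τ2 : ℝ) : ℝ :=
  (Real.sqrt (2 * Real.pi * τ2))⁻¹ * Real.exp (-(x - μ) ^ 2 / (2 * τ2))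

noncomputable def G1 (u : ℝ) : ℝ :=
  ((gaussianReal 0 1) {x | x ^ 2 ≤ u}).toReal

lemma nd_pos {τ2 : ℝ} (hτ : 0 < τ2) (x μ : ℝ) : 0 < nd x μ τ2 := by
  unfold nd
  have h1 : 0 < 2 * Real.pi * τ2 := by positivity
  positivity

lemma contAt_nd (a μ c : ℝ) (hc : 0 < c) :
    ContinuousAt (fun p : ℝ × ℝ => nd p.1 μ (c + p.2)) (a, 0) := by
  unfold nd
  have hc0 : (0:ℝ) < 2 * Real.pi * (c + (0:ℝ)) := by positivity
  refine ContinuousAt.mul (ContinuousAt.inv₀ (ContinuousAt.sqrt (by fun_prop)) ?_)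
    (ContinuousAt.rexp (ContinuousAt.div (by fun_prop) (by fun_prop) ?_))
  · exact ne_of_gt (Real.sqrt_pos.2 hc0)
  · have : (0:ℝ) < 2 * (c + (0:ℝ)) := by positivity
    exact ne_of_gt this

lemma g_tendsto (c : ℝ) (hc : 0 < c) :
    Tendsto (fun t : ℝ => (Real.sqrt (2 * Real.pi * t))⁻¹ * Real.exp (-c / t))
      (𝓝[>] (0:ℝ)) (𝓝 0) := by
  have h1 : Tendsto (fun u : ℝ => Real.sqrt u * Real.exp (-c * u)) atTop (𝓝 0) := by
    refine (tendsto_rpow_mul_exp_neg_mul_atTop_nhds_zero (1/2) c hc).congr' ?_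
    filter_upwards [eventually_ge_atTop (0:ℝ)] with u hu
    rw [Real.sqrt_eq_rpow]
  have h2 : Tendsto (fun t : ℝ => Real.sqrt t⁻¹ * Real.exp (-c * t⁻¹)) (𝓝[>] (0:ℝ)) (𝓝 0) :=
    h1.comp tendsto_inv_nhdsGT_zero
  have h3 := h2.const_mul (Real.sqrt (2 * Real.pi))⁻¹
  rw [mul_zero] at h3
  refine h3.congr' ?_
  filter_upwards [self_mem_nhdsWithin] with t (ht : 0 < t)
  rw [Real.sqrt_inv, Real.sqrt_mul (by positivity) t, mul_inv, div_eq_mul_inv (-c) t]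
  ring

lemma tail_tendsto :
    Tendsto (fun k : ℕ => (gaussianReal 0 1) {z : ℝ | (k:ℝ) ≤ |z|}) atTop (𝓝 0) := by
  have hmeas : ∀ k : ℕ, NullMeasurableSet {z : ℝ | (k:ℝ) ≤ |z|} (gaussianReal 0 1) := fun k =>
    (isClosed_le continuous_const continuous_abs).measurableSet.nullMeasurableSet
  have hanti : Antitone (fun k : ℕ => {z : ℝ | (k:ℝ) ≤ |z|}) := by
    intro i j hij z hz
    simp only [Set.mem_setOf_eq] at hz ⊢
    exact le_trans (by exact_mod_cast hij) hz
  have hfin : ∃ k : ℕ, (gaussianReal 0 1) {z : ℝ | (k:ℝ) ≤ |z|} ≠ ⊤ :=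
    ⟨0, measure_ne_top _ _⟩
  have hlim := tendsto_measure_iInter_atTop hmeas hanti hfin
  have hempty : (⋂ k : ℕ, {z : ℝ | (k:ℝ) ≤ |z|}) = ∅ := by
    ext z
    simp only [Set.mem_iInter, Set.mem_setOf_eq, Set.mem_empty_iff_false, iff_false, not_forall,
      not_le]
    obtain ⟨k, hk⟩ := exists_nat_gt |z|
    exact ⟨k, hk⟩
  rw [hempty, measure_empty] at hlim
  exact hlim

lemma den_lb (θs θo σo : ℝ) (hσo : 0 < σo) (x t : ℝ) (hx : |x - θs| ≤ |θs|)
    (ht0 : 0 ≤ t) (ht1 : t ≤ 1) :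
    (Real.sqrt (2 * Real.pi * (σo ^ 2 + 1)))⁻¹ *
      Real.exp (-((|θs - θo| + |θs|) ^ 2) / (2 * σo ^ 2)) ≤ nd x θo (σo ^ 2 + t) := by
  have hσo2 : (0:ℝ) < σo ^ 2 := by positivity
  have h1 : (0:ℝ) < σo ^ 2 + t := by linarith
  have hxb : |x - θo| ≤ |θs - θo| + |θs| := by
    have hrw : x - θo = (x - θs) + (θs - θo) := by ring
    calc |x - θo| = |(x - θs) + (θs - θo)| := by rw [hrw]
      _ ≤ |x - θs| + |θs - θo| := abs_add_le _ _
      _ ≤ |θs - θo| + |θs| := by linarith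
  have hsq : (x - θo) ^ 2 ≤ (|θs - θo| + |θs|) ^ 2 := by
    have h3 := sq_abs (x - θo)
    nlinarith [abs_nonneg (x - θo), abs_nonneg (θs - θo), abs_nonneg θs]
  unfold nd
  refine mul_le_mul ?_ ?_ (Real.exp_pos _).le (by positivity)
  · refine inv_anti₀ (by positivity) (Real.sqrt_le_sqrt ?_)
    nlinarith [Real.pi_pos]
  · refine Real.exp_le_exp.2 ?_
    rw [div_le_div_iff₀ (by positivity) (by positivity)]
    nlinarith [sq_nonneg (x - θo), mul_nonneg (sq_nonneg (x - θo)) ht0]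

lemma num_ub (θs x t : ℝ) (hx : |x - θs| ≤ |θs| / 2) (ht : 0 < t) :
    nd x 0 t ≤ (Real.sqrt (2 * Real.pi * t))⁻¹ * Real.exp (-(θs ^ 2 / 8) / t) := by
  have hxabs : |θs| / 2 ≤ |x| := by
    have h3 := abs_sub_abs_le_abs_sub θs x
    rw [abs_sub_comm θs x] at h3
    linarith
  have hxsq : θs ^ 2 / 4 ≤ x ^ 2 := by
    have h3 := sq_abs x
    have h4 := sq_abs θs
    nlinarith [abs_nonneg x, abs_nonneg θs]
  unfold nd
  refine mul_le_mul_of_nonneg_left (Real.exp_le_exp.2 ?_) (by positivity)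
  rw [sub_zero, div_le_div_iff₀ (by positivity) ht]
  nlinarith [mul_nonneg (by linarith : (0:ℝ) ≤ x ^ 2 - θs ^ 2 / 4) ht.le]

lemma mul_div_small (ψ ε m gb a : ℝ) (hψ : 0 < ψ) (hm : 0 < m) (ha0 : 0 ≤ a)
    (ha : a ≤ gb / m) (hgb : gb < ε / 2 * m / ψ) : ψ * a < ε / 2 := by
  have h1 : ψ * a ≤ ψ * (gb / m) := mul_le_mul_of_nonneg_left ha hψ.le
  have h2 : ψ * (gb / m) < ε / 2 := by
    rw [mul_div_assoc', div_lt_iff₀ hm]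
    calc ψ * gb < ψ * (ε / 2 * m / ψ) := mul_lt_mul_of_pos_left hgb hψ
      _ = ε / 2 * m := by field_simp
  linarith

theorem stmt11 (θs θo σo h ψ : ℝ) (σ2 : NNReal) (hθs : θs ≠ 0) (hσo : 0 < σo)
    (hh : 0 < h) (hψ0 : 0 < ψ) (hψ1 : ψ < 1) (hσ2 : 0 < σ2) :
    ∀ ε : ℝ, 0 < ε →
      Tendsto (fun n : ℕ =>
          (gaussianReal θs (σ2 / n)) {x |
            ε ≤ |ψ * (nd x 0 ((σ2 : ℝ) / n) / nd x θo (σo ^ 2 + (σ2 : ℝ) / n))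
                  + (1 - ψ) * (nd x 0 (h * σo ^ 2 + (σ2 : ℝ) / n) /
                      nd x θo (σo ^ 2 + (σ2 : ℝ) / n))
                  - (1 - ψ) * (nd θs 0 (h * σo ^ 2) / nd θs θo (σo ^ 2))|})
        atTop (𝓝 0) := by
  intro ε hε
  have hσo2 : (0:ℝ) < σo ^ 2 := by positivity
  have hhσo2 : (0:ℝ) < h * σo ^ 2 := by positivity
  set B : ℝ × ℝ → ℝ := fun p =>
    (1 - ψ) * (nd p.1 0 (h * σo ^ 2 + p.2) / nd p.1 θo (σo ^ 2 + p.2)) with hB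
  have hBcont : ContinuousAt B (θs, 0) :=
    (ContinuousAt.div (contAt_nd θs 0 _ hhσo2) (contAt_nd θs θo _ hσo2)
      (ne_of_gt (nd_pos (by positivity) _ _))).const_mul (1 - ψ)
  have hBval : B (θs, 0) = (1 - ψ) * (nd θs 0 (h * σo ^ 2) / nd θs θo (σo ^ 2)) := by
    simp [hB]
  obtain ⟨δ1, hδ1pos, hδ1⟩ := Metric.continuousAt_iff.1 hBcont (ε/2) (by linarith)
  set δ : ℝ := min δ1 (|θs| / 2) with hδdef
  have hθsabs : 0 < |θs| := abs_pos.2 hθs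
  have hδpos : 0 < δ := lt_min hδ1pos (by positivity)
  set m : ℝ := (Real.sqrt (2 * Real.pi * (σo ^ 2 + 1)))⁻¹ *
    Real.exp (-((|θs - θo| + |θs|) ^ 2) / (2 * σo ^ 2)) with hm
  have hmpos : 0 < m := by
    have h1 : (0:ℝ) < 2 * Real.pi * (σo ^ 2 + 1) := by positivity
    positivity
  have hg := g_tendsto (θs ^ 2 / 8) (by positivity)
  have hgev : ∀ᶠ t in 𝓝[>] (0:ℝ),
      (Real.sqrt (2 * Real.pi * t))⁻¹ * Real.exp (-(θs ^ 2 / 8) / t) < ε / 2 * m / ψ :=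
    hg.eventually_lt_const (by positivity)
  obtain ⟨δ2', hδ2'mem, hδ2'⟩ := mem_nhdsGT_iff_exists_Ioo_subset.1 hgev
  have hδ2pos : (0:ℝ) < δ2' := hδ2'mem
  have htn : Tendsto (fun n : ℕ => (σ2:ℝ) / n) atTop (𝓝 0) :=
    tendsto_const_div_atTop_nhds_zero_nat _
  have hσ2R : (0:ℝ) < (σ2:ℝ) := hσ2
  have hsmall : ∀ᶠ n : ℕ in atTop, (σ2:ℝ) / n < min δ1 (min δ2' 1) :=
    htn.eventually_lt_const (by positivity)
  have hone : ∀ᶠ n : ℕ in atTop, 1 ≤ n := eventually_ge_atTop 1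
  have hincl : ∀ᶠ n : ℕ in atTop,
      {x : ℝ |
        ε ≤ |ψ * (nd x 0 ((σ2 : ℝ) / n) / nd x θo (σo ^ 2 + (σ2 : ℝ) / n))
              + (1 - ψ) * (nd x 0 (h * σo ^ 2 + (σ2 : ℝ) / n) /
                  nd x θo (σo ^ 2 + (σ2 : ℝ) / n))
              - (1 - ψ) * (nd θs 0 (h * σo ^ 2) / nd θs θo (σo ^ 2))|}
        ⊆ {x : ℝ | δ ≤ |x - θs|} := by
    filter_upwards [hsmall, hone] with n hn h1n
    intro x hx
    simp only [Set.mem_setOf_eq] at hx ⊢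
    by_contra hxδ
    push_neg at hxδ
    set t : ℝ := (σ2:ℝ) / n with htdef
    have htpos : 0 < t := by
      have hnp : (0:ℝ) < (n:ℝ) := by exact_mod_cast h1n
      positivity
    have ht1 : t ≤ 1 := le_trans hn.le (le_trans (min_le_right _ _) (min_le_right _ _))
    have htδ1 : t < δ1 := lt_of_lt_of_le hn (min_le_left _ _)
    have htδ2 : t < δ2' := lt_of_lt_of_le hn (le_trans (min_le_right _ _) (min_le_left _ _))
    have hxhalf : |x - θs| ≤ |θs| / 2 := le_trans hxδ.le (min_le_right _ _)
    have hglt := hδ2' ⟨htpos, htδ2⟩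
    have hA1 : nd x 0 t / nd x θo (σo ^ 2 + t) ≤
        ((Real.sqrt (2 * Real.pi * t))⁻¹ * Real.exp (-(θs ^ 2 / 8) / t)) / m :=
      div_le_div₀ (by positivity) (num_ub θs x t hxhalf htpos) hmpos
        (den_lb θs θo σo hσo x t (by linarith) htpos.le ht1)
    have hApos : 0 ≤ nd x 0 t / nd x θo (σo ^ 2 + t) := by
      have h5 := nd_pos htpos x 0
      have h6 := nd_pos (by linarith : (0:ℝ) < σo ^ 2 + t) x θo
      positivity
    have hAfinal : ψ * (nd x 0 t / nd x θo (σo ^ 2 + t)) < ε / 2 :=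
      mul_div_small ψ ε m _ _ hψ0 hmpos hApos hA1 hglt
    have hdist : dist ((x, t) : ℝ × ℝ) (θs, 0) < δ1 := by
      rw [Prod.dist_eq]
      simp only [Real.dist_eq, sub_zero]
      refine max_lt (lt_of_lt_of_le hxδ (min_le_left _ _)) ?_
      rw [abs_of_pos htpos]; exact htδ1
    have hBlt : |B (x, t) - (1 - ψ) * (nd θs 0 (h * σo ^ 2) / nd θs θo (σo ^ 2))| < ε / 2 := by
      have h7 := hδ1 hdist
      rwa [Real.dist_eq, hBval] at h7
    have hrw : ψ * (nd x 0 t / nd x θo (σo ^ 2 + t))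
          + (1 - ψ) * (nd x 0 (h * σo ^ 2 + t) / nd x θo (σo ^ 2 + t))
          - (1 - ψ) * (nd θs 0 (h * σo ^ 2) / nd θs θo (σo ^ 2))
        = ψ * (nd x 0 t / nd x θo (σo ^ 2 + t))
          + (B (x, t) - (1 - ψ) * (nd θs 0 (h * σo ^ 2) / nd θs θo (σo ^ 2))) := by
      simp only [hB]; ring
    rw [hrw] at hx
    have habs : |ψ * (nd x 0 t / nd x θo (σo ^ 2 + t))
        + (B (x, t) - (1 - ψ) * (nd θs 0 (h * σo ^ 2) / nd θs θo (σo ^ 2)))| < ε := by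
      calc |ψ * (nd x 0 t / nd x θo (σo ^ 2 + t))
            + (B (x, t) - (1 - ψ) * (nd θs 0 (h * σo ^ 2) / nd θs θo (σo ^ 2)))|
          ≤ |ψ * (nd x 0 t / nd x θo (σo ^ 2 + t))|
            + |B (x, t) - (1 - ψ) * (nd θs 0 (h * σo ^ 2) / nd θs θo (σo ^ 2))| := abs_add_le _ _
        _ = ψ * (nd x 0 t / nd x θo (σo ^ 2 + t))
            + |B (x, t) - (1 - ψ) * (nd θs 0 (h * σo ^ 2) / nd θs θo (σo ^ 2))| := by
            rw [abs_of_nonneg (by positivity)]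
        _ < ε / 2 + ε / 2 := add_lt_add hAfinal hBlt
        _ = ε := by ring
    exact absurd hx (not_le.2 habs)
  refine ENNReal.tendsto_nhds_zero.2 fun ε' hε' => ?_
  obtain ⟨k, hk⟩ := (tail_tendsto.eventually_lt_const hε').exists
  have hcn : Tendsto (fun n : ℕ => Real.sqrt ((σ2:ℝ) / n) * k) atTop (𝓝 0) := by
    have h0 : Tendsto (fun n : ℕ => Real.sqrt ((σ2:ℝ) / n)) atTop (𝓝 0) := by
      have h1 := (Real.continuous_sqrt.tendsto 0).comp htn
      rwa [Real.sqrt_zero] at h1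
    have h2 := h0.mul_const (k:ℝ)
    rwa [zero_mul] at h2
  have hck : ∀ᶠ n : ℕ in atTop, Real.sqrt ((σ2:ℝ) / n) * k < δ :=
    hcn.eventually_lt_const hδpos
  filter_upwards [hincl, hck, hone] with n hn hckn h1n
  set c : ℝ := Real.sqrt ((σ2:ℝ) / n) with hc
  have hc0 : 0 ≤ c := Real.sqrt_nonneg _
  have hSmeas : MeasurableSet {x : ℝ | δ ≤ |x - θs|} :=
    (isClosed_le continuous_const
      (continuous_abs.comp (continuous_id.sub continuous_const))).measurableSet
  have hS2meas : MeasurableSet {y : ℝ | δ ≤ |y|} :=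
    (isClosed_le continuous_const continuous_abs).measurableSet
  have hmap1 : gaussianReal θs (σ2 / n) = (gaussianReal 0 (σ2 / n)).map (· + θs) := by
    rw [gaussianReal_map_add_const, zero_add]
  have hnpos : (0:ℝ) < (n:ℝ) := by exact_mod_cast h1n
  have hcoe : ((σ2 / n : NNReal) : ℝ) = (σ2:ℝ) / n := by
    rw [NNReal.coe_div, NNReal.coe_natCast]
  have hmap2 : gaussianReal 0 (σ2 / n) = (gaussianReal 0 1).map (c * ·) := by
    rw [gaussianReal_map_const_mul c, mul_zero]
    congr 1
    rw [mul_one]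
    ext
    simp only [NNReal.coe_mk]
    rw [hc, Real.sq_sqrt (by positivity), hcoe]
  calc (gaussianReal θs (σ2 / n)) {x : ℝ |
        ε ≤ |ψ * (nd x 0 ((σ2 : ℝ) / n) / nd x θo (σo ^ 2 + (σ2 : ℝ) / n))
              + (1 - ψ) * (nd x 0 (h * σo ^ 2 + (σ2 : ℝ) / n) /
                  nd x θo (σo ^ 2 + (σ2 : ℝ) / n))
              - (1 - ψ) * (nd θs 0 (h * σo ^ 2) / nd θs θo (σo ^ 2))|}
      ≤ (gaussianReal θs (σ2 / n)) {x : ℝ | δ ≤ |x - θs|} := measure_mono hn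
    _ = (gaussianReal 0 (σ2 / n)) ((· + θs) ⁻¹' {x : ℝ | δ ≤ |x - θs|}) := by
        rw [hmap1, Measure.map_apply (measurable_add_const θs) hSmeas]
    _ = (gaussianReal 0 (σ2 / n)) {y : ℝ | δ ≤ |y|} := by
        congr 1
        ext y
        simp [add_sub_cancel_right]
    _ = (gaussianReal 0 1) ((c * ·) ⁻¹' {y : ℝ | δ ≤ |y|}) := by
        rw [hmap2, Measure.map_apply (measurable_const_mul c) hS2meas]
    _ ≤ (gaussianReal 0 1) {z : ℝ | (k:ℝ) ≤ |z|} := by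
        refine measure_mono ?_
        intro z hz
        simp only [Set.mem_preimage, Set.mem_setOf_eq] at hz ⊢
        by_contra hzk
        push_neg at hzk
        have h7 : |c * z| = c * |z| := by rw [abs_mul, abs_of_nonneg hc0]
        have h8 : c * |z| ≤ c * k := mul_le_mul_of_nonneg_left hzk.le hc0
        rw [h7] at hz
        linarith
    _ ≤ ε' := hk.le
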